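/- arXiv:2206.04825 — 3 statements merged into one kernel-verified Lean document; each statement's English description precedes it below -/
import Mathlib

section
/- Let td(x) := x/(1 − exp(−x)) = Σ_{n≥0} ((−1)^n B_n / n!) x^n ∈ Q[[x]], where B_n are the Bernoulli numbers. Then for every natural number n, the rational number T_n · (−1)^n B_n / n! is an integer, where T_n := Π_{p prime} p^{⌊n/(p−1)⌋}. -/
/-- `T n = Π_{p prime} p^{⌊n/(p−1)⌋}`. -/
def integralToddDenom (n : ℕ) : ℕ :=
  ∏ p ∈ (Finset.range (n + 2)).filter Nat.Prime, p ^ (n / (p - 1))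

/-! Since `td(x) = x eˣ/(eˣ - 1)`, multiplying by `(eˣ - 1)/x = Σ xʲ/(j+1)!` gives `eˣ`, so the
coefficients `b_n = bernoulli' n / n! = (-1)ⁿ Bₙ / n!` of `td` satisfy
`b_n = 1/n! - Σ_{k<n} b_k / (n-k+1)!`. By strong induction on `n` it therefore suffices that
`n! ∣ T_n` and `(n-k+1)! · T_k ∣ T_n`. Prime by prime, both follow from Legendre's bound
`v_p((j+1)!) ≤ ⌊j/(p-1)⌋` and the superadditivity of `⌊·/(p-1)⌋`. -/

open Finset Nat

lemma integralToddDenom_pos (n : ℕ) : 0 < integralToddDenom n :=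
  prod_pos fun _ hp => pow_pos (mem_filter.mp hp).2.pos _

lemma integralToddDenom_zero : integralToddDenom 0 = 1 := by
  decide

lemma factorization_integralToddDenom (n : ℕ) {p : ℕ} (hp : p.Prime) :
    (integralToddDenom n).factorization p = n / (p - 1) := by
  rw [integralToddDenom, factorization_prod fun q hq => (pow_pos (mem_filter.mp hq).2.pos _).ne',
    Finset.sum_apply', sum_eq_single p, hp.factorization_pow, Finsupp.single_eq_same]
  · intro q hq hqp
    rw [(mem_filter.mp hq).2.factorization_pow, Finsupp.single_eq_of_ne hqp.symm]
  · intro hp'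
    have hnp : n < p - 1 := by
      by_contra!
      exact hp' (mem_filter.mpr ⟨mem_range.mpr (by omega), hp⟩)
    rw [hp.factorization_pow, Finsupp.single_eq_same, Nat.div_eq_of_lt hnp]

-- Legendre: `(p - 1) v_p((j + 1)!) = j + 1 - s_p(j + 1)`, and the digit sum `s_p(j + 1)` is positive.
lemma factorization_factorial_succ_le {p : ℕ} (hp : p.Prime) (j : ℕ) :
    (j + 1)!.factorization p ≤ j / (p - 1) := by
  have : Fact p.Prime := ⟨hp⟩
  rw [Nat.le_div_iff_mul_le (Nat.sub_pos_of_lt hp.one_lt), Nat.factorization_def _ hp, mul_comm]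
  exact Nat.le_of_lt_succ (sub_one_mul_padicValNat_factorial_lt_of_ne_zero p j.succ_ne_zero)

lemma factorial_succ_mul_integralToddDenom_dvd (i j : ℕ) :
    (j + 1)! * integralToddDenom i ∣ integralToddDenom (i + j) := by
  rw [← factorization_prime_le_iff_dvd (mul_ne_zero (factorial_ne_zero _)
    (integralToddDenom_pos i).ne') (integralToddDenom_pos _).ne']
  intro p hp
  rw [Nat.factorization_mul (factorial_ne_zero _) (integralToddDenom_pos i).ne', Finsupp.add_apply,
    factorization_integralToddDenom _ hp, factorization_integralToddDenom _ hp, add_comm i]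
  exact (Nat.add_le_add_right (factorization_factorial_succ_le hp j) _).trans
    Nat.div_add_div_le_add_div

lemma factorial_dvd_integralToddDenom (n : ℕ) : n ! ∣ integralToddDenom n :=
  (factorial_dvd_factorial n.le_succ).trans <| by
    simpa [integralToddDenom_zero] using factorial_succ_mul_integralToddDenom_dvd 0 n

lemma bernoulli'_div_factorial (n : ℕ) :
    bernoulli' n / (n ! : ℚ) =
      1 / (n ! : ℚ) - ∑ k ∈ range n, bernoulli' k / k ! / (n - k + 1)! := by
  rw [bernoulli'_def, sub_div, sum_div]
  congr 1
  refine sum_congr rfl fun k hk => ?_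
  have hkn : k ≤ n := (mem_range.mp hk).le
  rw [cast_choose ℚ hkn, factorial_succ, cast_mul, cast_add_one, cast_sub hkn]
  field_simp

lemma integralToddDenom_mul_bernoulli'_div_factorial_mem (n : ℕ) :
    (integralToddDenom n : ℚ) * (bernoulli' n / n !) ∈ (Int.castRingHom ℚ).range := by
  induction n using Nat.strong_induction_on with
  | _ n ih =>
  rw [bernoulli'_div_factorial, mul_sub, mul_sum]
  refine sub_mem ?_ (sum_mem fun k hk => ?_)
  · obtain ⟨c, hc⟩ := factorial_dvd_integralToddDenom n
    have hcast : (integralToddDenom n : ℚ) * (1 / n !) = c := by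
      rw [hc, cast_mul]
      field_simp
    exact hcast ▸ natCast_mem _ c
  · have hkn := mem_range.mp hk
    obtain ⟨c, hc⟩ : (n - k + 1)! * integralToddDenom k ∣ integralToddDenom n := by
      simpa [Nat.add_sub_cancel' hkn.le] using factorial_succ_mul_integralToddDenom_dvd k (n - k)
    have hcast : (integralToddDenom n : ℚ) * (bernoulli' k / k ! / (n - k + 1)!) =
        c * (integralToddDenom k * (bernoulli' k / k !)) := by
      rw [hc]
      push_cast
      field_simp
    exact hcast ▸ mul_mem (natCast_mem _ c) (ih k hkn)

/-- `T_n · (−1)^n B_n / n!` is an integer, where `B_n` is the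
`n`-th Bernoulli number (convention `x/(e^x−1) = Σ B_n x^n/n!`). -/
theorem integralToddDenom_mul_bernoulli_int (n : ℕ) :
    ∃ z : ℤ,
      (integralToddDenom n : ℚ) * ((-1) ^ n * bernoulli n / (n.factorial : ℚ)) = z := by
  obtain ⟨z, hz⟩ := integralToddDenom_mul_bernoulli'_div_factorial_mem n
  exact ⟨z, by rw [← bernoulli'_eq_bernoulli, ← hz]; rfl⟩
end

section
/- In the polynomial ring Q[a_1,…,a_{r_1}, b_1,…,b_{r_2}], for any l ≥ 0: (Σ_{i=1}^{r_1} exp^{(l)}(a_i))·(Σ_{j=1}^{r_2} exp^{(l)}(b_j)) ≡ Σ_{i=1}^{r_1} Σ_{j=1}^{r_2} exp^{(l)}(a_i + b_j) modulo the ideal generated by homogeneous elements of total degree ≥ l+1. -/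
open MvPolynomial Finset

/-- Truncated exponential in a commutative `ℚ`-algebra. -/
noncomputable def truncExp {A : Type*} [CommRing A] [Algebra ℚ A] (l : ℕ) (x : A) : A :=
  ∑ n ∈ Finset.range (l + 1), ((n.factorial : ℚ)⁻¹) • x ^ n

lemma key {σ : Type*} (a b : σ) {l m : ℕ} (hm : m ≤ l) :
    homogeneousComponent m ((truncExp l (X a) : MvPolynomial σ ℚ) * truncExp l (X b)) =
    homogeneousComponent m (truncExp l (X a + X b)) := by
  have hfac : ∀ k j : ℕ, ((k.factorial : ℚ)⁻¹ * (j.factorial : ℚ)⁻¹) ≠ 0 := by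
    intro k j
    positivity
  -- RHS
  have hR : homogeneousComponent m (truncExp l ((X a : MvPolynomial σ ℚ) + X b)) =
      ∑ k ∈ Finset.range (m + 1),
        ((k.factorial : ℚ)⁻¹ * ((m - k).factorial : ℚ)⁻¹) • (X a ^ k * X b ^ (m - k)) := by
    rw [truncExp, map_sum]
    have h1 : ∀ n ∈ Finset.range (l + 1),
        homogeneousComponent m (((n.factorial : ℚ)⁻¹) • ((X a : MvPolynomial σ ℚ) + X b) ^ n)
          = if n = m then ((n.factorial : ℚ)⁻¹) • ((X a + X b) ^ n : MvPolynomial σ ℚ) else 0 := by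
      intro n _
      rw [map_smul, homogeneousComponent_of_mem
        (((isHomogeneous_X ℚ a).add (isHomogeneous_X ℚ b)).pow n)]
      simp [eq_comm, smul_ite]
    rw [Finset.sum_congr rfl h1, Finset.sum_ite_eq' (Finset.range (l + 1))]
    rw [if_pos (by simp; omega)]
    rw [add_pow, Finset.smul_sum]
    refine Finset.sum_congr rfl fun k hk => ?_
    simp only [Finset.mem_range] at hk
    have hk' : k ≤ m := by omega
    have hc : ((m.choose k : ℕ) : MvPolynomial σ ℚ) = C ((m.choose k : ℚ)) := by
      simp
    have h2 : (X a : MvPolynomial σ ℚ) ^ k * X b ^ (m - k) * C ((m.choose k : ℚ))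
        = C ((m.choose k : ℚ)) * (X a ^ k * X b ^ (m - k)) := by ring
    rw [hc, h2, ← smul_eq_C_mul, smul_smul]
    congr 1
    rw [Nat.cast_choose ℚ hk']
    field_simp
  -- LHS
  have hL : homogeneousComponent m ((truncExp l (X a) : MvPolynomial σ ℚ) * truncExp l (X b)) =
      ∑ k ∈ Finset.range (m + 1),
        ((k.factorial : ℚ)⁻¹ * ((m - k).factorial : ℚ)⁻¹) • (X a ^ k * X b ^ (m - k)) := by
    rw [truncExp, truncExp, Finset.sum_mul_sum, map_sum]
    have h1 : ∀ p ∈ Finset.range (l + 1),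
        homogeneousComponent m (∑ q ∈ Finset.range (l + 1),
          (((p.factorial : ℚ)⁻¹) • (X a : MvPolynomial σ ℚ) ^ p) *
            (((q.factorial : ℚ)⁻¹) • X b ^ q))
        = ∑ q ∈ Finset.range (l + 1),
            if m = p + q then ((p.factorial : ℚ)⁻¹ * (q.factorial : ℚ)⁻¹) •
              ((X a : MvPolynomial σ ℚ) ^ p * X b ^ q) else 0 := by
      intro p _
      rw [map_sum]
      refine Finset.sum_congr rfl fun q _ => ?_
      rw [smul_mul_smul_comm, map_smul, homogeneousComponent_of_mem
        (((isHomogeneous_X ℚ a).pow p).mul ((isHomogeneous_X ℚ b).pow q))]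
      simp [smul_ite]
    rw [Finset.sum_congr rfl h1]
    rw [← Finset.sum_subset (Finset.range_subset_range.2 (by omega) :
        Finset.range (m + 1) ⊆ Finset.range (l + 1))]
    · refine Finset.sum_congr rfl fun p hp => ?_
      simp only [Finset.mem_range] at hp
      have hp' : p ≤ m := by omega
      rw [Finset.sum_eq_single (m - p)]
      · rw [if_pos (by omega)]
      · intro q _ hq
        rw [if_neg (by omega)]
      · intro h
        exact absurd (Finset.mem_range.2 (by omega)) h
    · intro p hp hnp
      simp only [Finset.mem_range] at hp hnp
      refine Finset.sum_eq_zero fun q _ => ?_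
      rw [if_neg (by omega)]
  rw [hL, hR]

/-- in `ℚ[a_1,…,a_{r₁},b_1,…,b_{r₂}]`,
`(Σ_i exp^{(l)}(a_i))·(Σ_j exp^{(l)}(b_j)) ≡ Σ_i Σ_j exp^{(l)}(a_i+b_j)`
modulo homogeneous elements of total degree `≥ l+1`: all homogeneous components
of degree `≤ l` of the difference vanish. -/
theorem truncExp_sum_mul_sum (r₁ r₂ l : ℕ) :
    ∀ m ≤ l,
      MvPolynomial.homogeneousComponent m
        ((∑ i : Fin r₁,
            truncExp l (MvPolynomial.X (Sum.inl i) : MvPolynomial (Fin r₁ ⊕ Fin r₂) ℚ)) *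
          (∑ j : Fin r₂, truncExp l (MvPolynomial.X (Sum.inr j))) -
          ∑ i : Fin r₁, ∑ j : Fin r₂,
            truncExp l (MvPolynomial.X (Sum.inl i) + MvPolynomial.X (Sum.inr j))) = 0 := by
  intro m hm
  rw [map_sub, sub_eq_zero, Finset.sum_mul_sum, map_sum, map_sum]
  refine Finset.sum_congr rfl fun i _ => ?_
  rw [map_sum, map_sum]
  exact Finset.sum_congr rfl fun j _ => key (Sum.inl i) (Sum.inr j) hm
end

section
/- Let n, m be natural numbers. The Euler characteristic χ(P^m, O(n)) = Σ_i (−1)^i dim H^i(P^m, O(n)) of the line bundle O(n) on projective m-space over a field equals the binomial coefficient C(n+m, m), and this equals the evaluation at degree-0 part of ch(O(n))·Td(T_{P^m}): explicitly, C(n+m, m) is the coefficient of h^m in the power series expansion of e^{nh}·(h/(1−e^{−h}))^{m+1} in Q[[h]]. -/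
/-!
The series `T = x / (1 - e^{-x})` is `bernoulli'PowerSeries`, and `T e^x = T + x e^x`.
Multiplying by `e^{nx} T^{m+1}` shows that `f n m = [x^m] e^{nx} T^{m+1}` satisfies Pascal's rule
`f (n+1) (m+1) = f n (m+1) + f (n+1) m`. The boundary values are `f n 0 = 1` and `f 0 m = 1`;
the latter holds because `T` solves `x T' = T + x T - T²`, and comparing coefficients of
`x^{m+1}` in `x (T^{m+1})'` turns this into `[x^{m+1}] T^{m+2} = [x^m] T^{m+1}`.
-/

open PowerSeries

namespace PowerSeries

variable {A : Type*} [CommRing A] [Algebra ℚ A]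

theorem derivative_evalNegHom_exp : d⁄dX A (evalNegHom (exp A)) = -evalNegHom (exp A) := by
  have h := congrArg (d⁄dX A) (exp_mul_exp_neg_eq_one (A := A))
  rw [Derivation.leibniz, derivative_exp, derivative_one, smul_eq_mul, smul_eq_mul] at h
  linear_combination evalNegHom (exp A) * h -
    (d⁄dX A (evalNegHom (exp A)) + evalNegHom (exp A)) * exp_mul_exp_neg_eq_one (A := A)

theorem bernoulli'PowerSeries_mul_exp :
    bernoulli'PowerSeries A * exp A = bernoulli'PowerSeries A + X * exp A := by
  linear_combination bernoulli'PowerSeries_mul_exp_sub_one A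

theorem bernoulli'PowerSeries_mul_one_sub_evalNegHom_exp :
    bernoulli'PowerSeries A * (1 - evalNegHom (exp A)) = X := by
  linear_combination evalNegHom (exp A) * bernoulli'PowerSeries_mul_exp_sub_one A +
    (X - bernoulli'PowerSeries A) * exp_mul_exp_neg_eq_one (A := A)

theorem X_mul_derivative_bernoulli'PowerSeries :
    X * d⁄dX A (bernoulli'PowerSeries A) =
      bernoulli'PowerSeries A + X * bernoulli'PowerSeries A - bernoulli'PowerSeries A ^ 2 := by
  have h := congrArg (d⁄dX A) (bernoulli'PowerSeries_mul_one_sub_evalNegHom_exp (A := A))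
  rw [Derivation.leibniz, map_sub, derivative_one, derivative_evalNegHom_exp, derivative_X,
    smul_eq_mul, smul_eq_mul] at h
  linear_combination bernoulli'PowerSeries A * h +
    (bernoulli'PowerSeries A - d⁄dX A (bernoulli'PowerSeries A)) *
      bernoulli'PowerSeries_mul_one_sub_evalNegHom_exp (A := A)

theorem X_mul_derivative_bernoulli'PowerSeries_pow (k : ℕ) :
    X * d⁄dX A (bernoulli'PowerSeries A ^ (k + 1)) =
      (k + 1) • (bernoulli'PowerSeries A ^ (k + 1) + X * bernoulli'PowerSeries A ^ (k + 1) -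
        bernoulli'PowerSeries A ^ (k + 2)) := by
  rw [Derivation.leibniz_pow, Nat.add_sub_cancel, smul_eq_mul, nsmul_eq_mul, nsmul_eq_mul]
  linear_combination ((k + 1 : ℕ) : A⟦X⟧) * bernoulli'PowerSeries A ^ k *
    X_mul_derivative_bernoulli'PowerSeries (A := A)

theorem coeff_succ_bernoulli'PowerSeries_pow_succ (m : ℕ) :
    coeff (m + 1) (bernoulli'PowerSeries A ^ (m + 2)) =
      coeff m (bernoulli'PowerSeries A ^ (m + 1)) := by
  have := IsAddTorsionFree.of_module_rat A
  have h := congrArg (coeff (m + 1)) (X_mul_derivative_bernoulli'PowerSeries_pow (A := A) m)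
  rw [coeff_succ_X_mul, coeff_derivative, map_nsmul, map_sub, map_add, coeff_succ_X_mul,
    nsmul_eq_mul] at h
  have h' : (m + 1) • (coeff m (bernoulli'PowerSeries A ^ (m + 1)) -
      coeff (m + 1) (bernoulli'PowerSeries A ^ (m + 2))) = 0 := by
    rw [nsmul_eq_mul]
    push_cast at h ⊢
    linear_combination -h
  exact (sub_eq_zero.mp ((smul_eq_zero.mp h').resolve_left m.succ_ne_zero)).symm

theorem coeff_bernoulli'PowerSeries_pow_succ_self (m : ℕ) :
    coeff m (bernoulli'PowerSeries A ^ (m + 1)) = 1 := by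
  induction m with
  | zero => simp [bernoulli'PowerSeries]
  | succ m ih => rw [coeff_succ_bernoulli'PowerSeries_pow_succ, ih]

theorem exp_pow_succ_mul_bernoulli'PowerSeries_pow_succ (n m : ℕ) :
    exp A ^ (n + 1) * bernoulli'PowerSeries A ^ (m + 2) =
      exp A ^ n * bernoulli'PowerSeries A ^ (m + 2) +
        X * (exp A ^ (n + 1) * bernoulli'PowerSeries A ^ (m + 1)) := by
  linear_combination exp A ^ n * bernoulli'PowerSeries A ^ (m + 1) *
    bernoulli'PowerSeries_mul_exp (A := A)

theorem coeff_exp_pow_mul_bernoulli'PowerSeries_pow (n m : ℕ) :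
    coeff m (exp A ^ n * bernoulli'PowerSeries A ^ (m + 1)) = ((n + m).choose m : A) := by
  induction m generalizing n with
  | zero => simp [bernoulli'PowerSeries]
  | succ m ihm =>
    induction n with
    | zero => simp [coeff_bernoulli'PowerSeries_pow_succ_self]
    | succ n ihn =>
      rw [exp_pow_succ_mul_bernoulli'PowerSeries_pow_succ, map_add, coeff_succ_X_mul, ihn, ihm,
        ← Nat.cast_add, add_comm, show n + 1 + m = n + (m + 1) by omega, ← Nat.choose_succ_succ',
        show n + 1 + (m + 1) = n + (m + 1) + 1 by omega]

theorem mk_natCast_pow_div_factorial (n : ℕ) :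
    (mk fun k => (n : ℚ) ^ k / (k.factorial : ℚ)) = exp ℚ ^ n := by
  ext k
  simp [exp_pow_eq_rescale_exp, coeff_rescale, div_eq_mul_inv]

theorem mk_neg_one_pow_mul_bernoulli_div_factorial :
    (mk fun k => (-1 : ℚ) ^ k * bernoulli k / (k.factorial : ℚ)) = bernoulli'PowerSeries ℚ := by
  ext k
  simp [bernoulli'PowerSeries, bernoulli'_eq_bernoulli]

end PowerSeries

/-- Hirzebruch Riemann–Roch on `ℙ^m`, formal content:
`χ(ℙ^m, O(n)) = C(n+m, m)` equals the degree-`0` part of `ch(O(n))·Td(T_{ℙ^m})`,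
i.e. the coefficient of `h^m` in `e^{nh}·(h/(1−e^{−h}))^{m+1} ∈ ℚ[[h]]` equals
the binomial coefficient `C(n+m, m)`. -/
theorem coeff_exp_mul_todd_pow_eq_choose (n m : ℕ) :
    PowerSeries.coeff (R := ℚ) m
        ((PowerSeries.mk fun k => (n : ℚ) ^ k / (k.factorial : ℚ)) *
          (PowerSeries.mk fun k => (-1 : ℚ) ^ k * bernoulli k / (k.factorial : ℚ)) ^ (m + 1)) =
      Nat.choose (n + m) m := by
  rw [mk_natCast_pow_div_factorial, mk_neg_one_pow_mul_bernoulli_div_factorial]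
  exact coeff_exp_pow_mul_bernoulli'PowerSeries_pow n m
end
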